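/- arXiv:1002.2352 — 5 statements merged into one kernel-verified Lean document; each statement's English description precedes it below -/
import Mathlib

section
/- Let A be a (not necessarily associative or unital) algebra over a field K of characteristic not 2 that has at least three elements. If A is third power-associative, i.e. (x·x)·x = x·(x·x) for all x ∈ A, then A satisfies the identity (x, x², x) = 0, i.e. (x·(x·x))·x = x·((x·x)·x) for all x ∈ A. -/
/-- If `A` is a (not necessarily associative or unital) algebra over a field `K` of
characteristic different from 2 having at least three elements, and `A` is third
power-associative, then `A` satisfies the identity `(x, x², x) = 0`. -/
theorem stmt_0 {K : Type*} [Field K] {A : Type*} [AddCommGroup A] [Module K A]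
    (mul : A →ₗ[K] A →ₗ[K] A)
    (hchar : (2 : K) ≠ 0)
    (hcard : ∃ x y z : K, x ≠ y ∧ x ≠ z ∧ y ≠ z)
    (h3pa : ∀ x : A, mul (mul x x) x = mul x (mul x x)) :
    ∀ x : A, mul (mul x (mul x x)) x = mul x (mul (mul x x) x) := by
  obtain ⟨a, b, d, hab, had, hbd⟩ := hcard
  obtain ⟨c, hc0, hc1⟩ : ∃ c : K, c ≠ 0 ∧ c ≠ 1 := by
    by_cases h : b - a = 1
    · refine ⟨d - a, sub_ne_zero.mpr (Ne.symm had), fun hh => hbd ?_⟩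
      linear_combination h - hh
    · exact ⟨b - a, sub_ne_zero.mpr (Ne.symm hab), h⟩
  have lin : ∀ x y : A,
      mul (mul x x) y + mul (mul x y) x + mul (mul y x) x
        - mul x (mul x y) - mul x (mul y x) - mul y (mul x x) = 0 := by
    intro x y
    set p := mul (mul x x) y + mul (mul x y) x + mul (mul y x) x
        - mul x (mul x y) - mul x (mul y x) - mul y (mul x x) with hp
    set q := mul (mul x y) y + mul (mul y x) y + mul (mul y y) x
        - mul x (mul y y) - mul y (mul x y) - mul y (mul y x) with hq
    have e1 : p + q = 0 := by
      have h := h3pa (x + y)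
      simp only [map_add, LinearMap.add_apply] at h
      rw [hp, hq]
      linear_combination (norm := module) h - h3pa x - h3pa y
    have e2 : c • p + (c * c) • q = 0 := by
      have h := h3pa (x + c • y)
      simp only [map_add, map_smul, LinearMap.add_apply, LinearMap.smul_apply] at h
      rw [hp, hq]
      linear_combination (norm := module) h - h3pa x - (c*c*c) • h3pa y
    have hq0 : q = 0 := by
      have hz : (c * c - c) • q = 0 := by
        linear_combination (norm := module) e2 - c • e1
      have hne : c * c - c ≠ 0 := fun h => by
        rcases mul_eq_zero.mp (show c * (c - 1) = 0 by linear_combination h) with h' | h'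
        · exact hc0 h'
        · exact hc1 (by linear_combination h')
      exact (smul_eq_zero.mp hz).resolve_left hne
    have hp0 : p = 0 := by rwa [hq0, add_zero] at e1
    exact hp0
  intro x
  have key := lin x (mul x x)
  have h1 : mul (mul x x) x = mul x (mul x x) := h3pa x
  have h2 : (2 : K) • (mul (mul x (mul x x)) x - mul x (mul (mul x x) x)) = 0 := by
    have e3 : mul (mul (mul x x) x) x = mul (mul x (mul x x)) x := by rw [h1]
    have e4 : mul x (mul (mul x x) x) = mul x (mul x (mul x x)) := by rw [h1]
    linear_combination (norm := module) key - e3 - e4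
  have h3 := (smul_eq_zero.mp h2).resolve_left hchar
  exact sub_eq_zero.mp h3
end

section
/- Let a be a quaternion such that (a x a) x = x (a x a) for every purely imaginary quaternion x. Then a is real, i.e. a ∈ ℝ·1. -/
/-- If a quaternion `a` satisfies `(a x a) x = x (a x a)` for every purely imaginary
quaternion `x`, then `a` is real. -/
theorem stmt_2 (a : Quaternion ℝ)
    (h : ∀ x : Quaternion ℝ, x.re = 0 → (a * x * a) * x = x * (a * x * a)) :
    ∃ r : ℝ, a = (r : Quaternion ℝ) := by
  refine ⟨a.re, ?_⟩
  have h1 := h (id (α := Quaternion ℝ) ⟨0,1,0,0⟩) rfl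
  have h3 := h (id (α := Quaternion ℝ) ⟨0,1,1,0⟩) rfl
  have h4 := h (id (α := Quaternion ℝ) ⟨0,1,0,1⟩) rfl
  rw [Quaternion.ext_iff] at h1 h3 h4
  simp only [Quaternion.re_mul, Quaternion.imI_mul, Quaternion.imJ_mul, Quaternion.imK_mul] at h1 h3 h4
  obtain ⟨a0, a1, a2, a3⟩ := a
  simp only [id] at h1 h3 h4
  obtain ⟨-, -, -, e4⟩ := h1
  obtain ⟨-, -, -, g4⟩ := h3
  obtain ⟨-, -, k3, -⟩ := h4
  have hxy : a1 * a2 = 0 := by linear_combination (1/4 : ℝ) * e4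
  have hg : a2 ^ 2 = a1 ^ 2 := by linear_combination (1/4 : ℝ) * g4
  have hk : a3 ^ 2 = a1 ^ 2 := by linear_combination (-1/4 : ℝ) * k3
  have h14 : a1 ^ 4 = 0 := by linear_combination (a1 * a2) * hxy - a1 ^ 2 * hg
  have ha1 : a1 = 0 := pow_eq_zero_iff (by norm_num : (4:ℕ) ≠ 0) |>.mp h14
  have ha2 : a2 = 0 := pow_eq_zero_iff (by norm_num : (2:ℕ) ≠ 0) |>.mp (by rw [hg, ha1]; ring)
  have ha3 : a3 = 0 := pow_eq_zero_iff (by norm_num : (2:ℕ) ≠ 0) |>.mp (by rw [hk, ha1]; ring)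
  subst ha1 ha2 ha3
  rfl
end

section
/- Let a, b be norm-one quaternions and let ⁎ℍ(a,b) be the algebra on ℍ with product x⊙y = a x̄ ȳ b. Then ⁎ℍ(a,b) satisfies none of the four identities (x,x,x²)=0, (x,x²,x²)=0, (x²,x,x)=0, (x²,x²,x)=0; that is, for each of these four identities there exists x ∈ ℍ at which the corresponding associator is nonzero. -/
set_option linter.unusedSectionVars false
set_option linter.unusedVariables false

/-- The product of the principal isotope `⁎ℍ(a,b)`: `x ⊙ y = a * x̄ * ȳ * b`. -/
noncomputable def isoMul4 (a b x y : Quaternion ℝ) : Quaternion ℝ := a * star x * star y * b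


section G
variable {R : Type*} [Mul R] [One R] [Neg R] [Star R]

/-- anticommuting with i, j, k = i*j forces w = -w -/
theorem anti0
    (hassoc : ∀ x y z : R, x * y * z = x * (y * z))
    (hmn : ∀ x y : R, x * -y = -(x * y))
    (hnm : ∀ x y : R, -x * y = -(x * y))
    (hnn : ∀ x : R, - -x = x)
    (i j k w : R) (hij : i * j = k) (hkk : ∀ t, k * (k * t) = -t)
    (h1 : w * i = -(i * w)) (h2 : w * j = -(j * w)) (h3 : w * k = -(k * w)) : w = -w := by
  have wk : w * k = k * w := by
    rw [← hij, ← hassoc, h1, hnm, hassoc, h2, hmn, hnn, ← hassoc, hij]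
  rw [wk] at h3
  have C := congrArg (fun t => k * t) h3
  simp only [hkk, hmn] at C
  rw [hnn] at C
  exact C.symm

/-- convert `w = e * (w * e)` into anticommutation -/
theorem conv0
    (hassoc : ∀ x y z : R, x * y * z = x * (y * z))
    (hmn : ∀ x y : R, x * -y = -(x * y))
    (hm1 : ∀ x : R, x * 1 = x)
    (e w : R) (hee : ∀ t : R, e * (e * t) = -t)
    (h : w = e * (w * e)) : w * e = -(e * w) := by
  have hee2 : e * e = -1 := by rw [← hm1 (e*e), hassoc]; exact hee 1
  have C := congrArg (fun t => t * e) h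
  rw [hassoc, hassoc, hee2, hmn, hm1, hmn] at C
  exact C
variable (a b : R)

theorem gkey1
    (hassoc : ∀ x y z : R, x * y * z = x * (y * z))
    (hstm : ∀ x y : R, star (x * y) = star y * star x)
    (hsts : ∀ x : R, star (star x) = x)
    (hst1 : star (1 : R) = 1)
    (hstn : ∀ x : R, star (-x) = -(star x))
    (hmn : ∀ x y : R, x * -y = -(x * y))
    (hnm : ∀ x y : R, -x * y = -(x * y))
    (hnn : ∀ x : R, - -x = x)
    (h1m : ∀ x : R, 1 * x = x)
    (hm1 : ∀ x : R, x * 1 = x)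
    (hpa' : ∀ t : R, star a * (a * t) = t)
    (hbq' : ∀ t : R, b * (star b * t) = t)
    (hpa : star a * a = 1) (hbq : b * star b = 1)
    (e : R) (hee : ∀ t, e * (e * t) = -t) (hse : star e = -e)
    (H1 : a * star (a * star 1 * star 1 * b) * star (a * star 1 * star 1 * b) * b
        = a * star 1 * star (a * star 1 * star (a * star 1 * star 1 * b) * b) * b)
    (He : a * star (a * star e * star e * b) * star (a * star e * star e * b) * b
        = a * star e * star (a * star e * star (a * star e * star e * b) * b) * b) :
    (star b * (a * b)) * e = -(e * (star b * (a * b))) := by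
  simp only [hstm, hsts, hst1, h1m, hm1, hassoc] at H1 He
  simp only [hse, hnm, hmn, hnn, hstn, hee] at He
  have C := congrArg (fun t => star a * (t * (star b * a))) (H1.symm.trans He)
  simp only [hassoc, hpa', hbq', hpa, hbq, hm1] at C
  refine conv0 hassoc hmn hm1 e _ hee ?_
  simp only [hassoc]
  exact C

theorem gkey2
    (hassoc : ∀ x y z : R, x * y * z = x * (y * z))
    (hstm : ∀ x y : R, star (x * y) = star y * star x)
    (hsts : ∀ x : R, star (star x) = x)
    (hst1 : star (1 : R) = 1)
    (hstn : ∀ x : R, star (-x) = -(star x))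
    (hmn : ∀ x y : R, x * -y = -(x * y))
    (hnm : ∀ x y : R, -x * y = -(x * y))
    (hnn : ∀ x : R, - -x = x)
    (h1m : ∀ x : R, 1 * x = x)
    (hm1 : ∀ x : R, x * 1 = x)
    (hpa' : ∀ t : R, star a * (a * t) = t)
    (hap' : ∀ t : R, a * (star a * t) = t)
    (hbq' : ∀ t : R, b * (star b * t) = t)
    (hqb' : ∀ t : R, star b * (b * t) = t)
    (hpa : star a * a = 1) (hap : a * star a = 1)
    (hqb : star b * b = 1) (hbq : b * star b = 1)
    (e : R) (hee : ∀ t, e * (e * t) = -t) (hse : star e = -e)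
    (H1 : a * star (a * star 1 * star (a * star 1 * star 1 * b) * b) * star (a * star 1 * star 1 * b) * b
        = a * star 1 * star (a * star (a * star 1 * star 1 * b) * star (a * star 1 * star 1 * b) * b) * b)
    (He : a * star (a * star e * star (a * star e * star e * b) * b) * star (a * star e * star e * b) * b
        = a * star e * star (a * star (a * star e * star e * b) * star (a * star e * star e * b) * b) * b) :
    (star b * (a * b)) * e = -(e * (star b * (a * b))) := by
  simp only [hstm, hsts, hst1, h1m, hm1, hassoc] at H1 He
  simp only [hse, hnm, hmn, hnn, hstn, hee] at He
  have G := congrArg (fun t => star b * (star a * (b * (star a * t)))) H1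
  simp only [hassoc, hpa', hbq', hqb'] at G
  rw [G] at He
  have C := congrArg (fun t => star a * (t * (star b * (a * (star b * star a))))) He
  simp only [hassoc, hpa', hap', hbq', hqb', hpa, hap, hbq, hqb, hm1, hmn, hnm] at C
  simp only [hassoc]
  exact C

theorem gkey3
    (hassoc : ∀ x y z : R, x * y * z = x * (y * z))
    (hstm : ∀ x y : R, star (x * y) = star y * star x)
    (hsts : ∀ x : R, star (star x) = x)
    (hst1 : star (1 : R) = 1)
    (hstn : ∀ x : R, star (-x) = -(star x))
    (hmn : ∀ x y : R, x * -y = -(x * y))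
    (hnm : ∀ x y : R, -x * y = -(x * y))
    (hnn : ∀ x : R, - -x = x)
    (h1m : ∀ x : R, 1 * x = x)
    (hm1 : ∀ x : R, x * 1 = x)
    (hpa' : ∀ t : R, star a * (a * t) = t)
    (hbq' : ∀ t : R, b * (star b * t) = t)
    (hqb' : ∀ t : R, star b * (b * t) = t)
    (hpa : star a * a = 1) (hqb : star b * b = 1) (hbq : b * star b = 1)
    (e : R) (hee : ∀ t, e * (e * t) = -t) (hse : star e = -e)
    (H1 : a * star (a * star (a * star 1 * star 1 * b) * star 1 * b) * star 1 * b
        = a * star (a * star 1 * star 1 * b) * star (a * star 1 * star 1 * b) * b)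
    (He : a * star (a * star (a * star e * star e * b) * star e * b) * star e * b
        = a * star (a * star e * star e * b) * star (a * star e * star e * b) * b) :
    (a * (b * star a)) * e = -(e * (a * (b * star a))) := by
  simp only [hstm, hsts, hst1, h1m, hm1, hassoc] at H1 He
  simp only [hse, hnm, hmn, hnn, hstn, hee] at He
  have C := congrArg (fun t => b * (star a * t) * star b) (He.trans H1.symm)
  simp only [hassoc, hpa', hbq', hqb', hpa, hbq, hqb, hm1] at C
  refine conv0 hassoc hmn hm1 e _ hee ?_
  simp only [hassoc]
  exact C.symm

theorem gkey4
    (hassoc : ∀ x y z : R, x * y * z = x * (y * z))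
    (hstm : ∀ x y : R, star (x * y) = star y * star x)
    (hsts : ∀ x : R, star (star x) = x)
    (hst1 : star (1 : R) = 1)
    (hstn : ∀ x : R, star (-x) = -(star x))
    (hmn : ∀ x y : R, x * -y = -(x * y))
    (hnm : ∀ x y : R, -x * y = -(x * y))
    (hnn : ∀ x : R, - -x = x)
    (h1m : ∀ x : R, 1 * x = x)
    (hm1 : ∀ x : R, x * 1 = x)
    (hpa' : ∀ t : R, star a * (a * t) = t)
    (hap' : ∀ t : R, a * (star a * t) = t)
    (hbq' : ∀ t : R, b * (star b * t) = t)
    (hqb' : ∀ t : R, star b * (b * t) = t)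
    (hpa : star a * a = 1) (hap : a * star a = 1)
    (hqb : star b * b = 1) (hbq : b * star b = 1)
    (e : R) (hee : ∀ t, e * (e * t) = -t) (hse : star e = -e)
    (H1 : a * star (a * star (a * star 1 * star 1 * b) * star (a * star 1 * star 1 * b) * b) * star 1 * b
        = a * star (a * star 1 * star 1 * b) * star (a * star (a * star 1 * star 1 * b) * star 1 * b) * b)
    (He : a * star (a * star (a * star e * star e * b) * star (a * star e * star e * b) * b) * star e * b
        = a * star (a * star e * star e * b) * star (a * star (a * star e * star e * b) * star e * b) * b) :
    (a * (b * star a)) * e = -(e * (a * (b * star a))) := by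
  simp only [hstm, hsts, hst1, h1m, hm1, hassoc] at H1 He
  simp only [hse, hnm, hmn, hnn, hstn, hee] at He
  have H1c := congrArg (fun t => b * (star a * t)) H1
  simp only [hassoc, hpa', hbq', hqb'] at H1c
  have P1 := congrArg (fun t => t * (star b * (a * (star b * star a)))) H1c
  simp only [hassoc, hpa', hap', hbq', hqb', hpa, hap, hbq, hqb, hm1] at P1
  have P1' : ∀ t : R, star a * (star b * t) = a * (b * t) := fun t => by
    rw [← hassoc, ← hassoc, ← P1]
  have Hec := congrArg (fun t => b * (star a * t)) He
  simp only [hassoc, hpa', hbq', hqb', hmn, hnm] at Hec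
  rw [P1'] at Hec
  have C := congrArg (fun t => star b * (star a * t) * star b) Hec
  simp only [hassoc, hpa', hap', hbq', hqb', hpa, hap, hbq, hqb, hm1, hmn, hnm] at C
  simp only [hassoc]
  rw [← C, hnn]

end G


noncomputable def qI : Quaternion ℝ := ⟨0,1,0,0⟩
noncomputable def qJ : Quaternion ℝ := ⟨0,0,1,0⟩
noncomputable def qK : Quaternion ℝ := ⟨0,0,0,1⟩

private lemma sq_qI : ∀ t : Quaternion ℝ, qI * (qI * t) = -t := by
  intro t
  rw [← mul_assoc]
  have : qI * qI = -1 := by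
    rw [Quaternion.ext_iff]
    simp [Quaternion.re_mul, Quaternion.imI_mul, Quaternion.imJ_mul, Quaternion.imK_mul, Quaternion.re_one, Quaternion.imI_one, Quaternion.imJ_one, Quaternion.imK_one]; simp [qI]
  rw [this, neg_one_mul]

private lemma sq_qJ : ∀ t : Quaternion ℝ, qJ * (qJ * t) = -t := by
  intro t
  rw [← mul_assoc]
  have : qJ * qJ = -1 := by
    rw [Quaternion.ext_iff]
    simp [Quaternion.re_mul, Quaternion.imI_mul, Quaternion.imJ_mul, Quaternion.imK_mul, Quaternion.re_one, Quaternion.imI_one, Quaternion.imJ_one, Quaternion.imK_one]; simp [qJ]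
  rw [this, neg_one_mul]

private lemma sq_qK : ∀ t : Quaternion ℝ, qK * (qK * t) = -t := by
  intro t
  rw [← mul_assoc]
  have : qK * qK = -1 := by
    rw [Quaternion.ext_iff]
    simp [Quaternion.re_mul, Quaternion.imI_mul, Quaternion.imJ_mul, Quaternion.imK_mul, Quaternion.re_one, Quaternion.imI_one, Quaternion.imJ_one, Quaternion.imK_one]; simp [qK]
  rw [this, neg_one_mul]

private lemma star_qI : star qI = -qI := by
  rw [Quaternion.ext_iff]; simp [Quaternion.re_star, Quaternion.imI_star, Quaternion.imJ_star, Quaternion.imK_star]; simp [qI]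

private lemma star_qJ : star qJ = -qJ := by
  rw [Quaternion.ext_iff]; simp [Quaternion.re_star, Quaternion.imI_star, Quaternion.imJ_star, Quaternion.imK_star]; simp [qJ]

private lemma star_qK : star qK = -qK := by
  rw [Quaternion.ext_iff]; simp [Quaternion.re_star, Quaternion.imI_star, Quaternion.imJ_star, Quaternion.imK_star]; simp [qK]

private lemma mul_qIJ : qI * qJ = qK := by
  rw [Quaternion.ext_iff]
  simp [Quaternion.re_mul, Quaternion.imI_mul, Quaternion.imJ_mul, Quaternion.imK_mul]; simp [qI, qJ, qK]

private lemma eq_zero_of_eq_neg (w : Quaternion ℝ) (h : w = -w) : w = 0 := by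
  have h2 : (2 : ℝ) • w = 0 := by
    rw [two_smul]
    nth_rewrite 2 [h]
    exact add_neg_cancel w
  have := smul_eq_zero.mp h2
  simpa using this

/-- For norm-one quaternions `a, b`, the algebra `⁎ℍ(a,b)` satisfies none of the four
identities `(x,x,x²)=0`, `(x,x²,x²)=0`, `(x²,x,x)=0`, `(x²,x²,x)=0`. -/
theorem stmt_6 (a b : Quaternion ℝ) (ha : ‖a‖ = 1) (hb : ‖b‖ = 1) :
    (∃ x : Quaternion ℝ,
        isoMul4 a b (isoMul4 a b x x) (isoMul4 a b x x)
          ≠ isoMul4 a b x (isoMul4 a b x (isoMul4 a b x x))) ∧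
    (∃ x : Quaternion ℝ,
        isoMul4 a b (isoMul4 a b x (isoMul4 a b x x)) (isoMul4 a b x x)
          ≠ isoMul4 a b x (isoMul4 a b (isoMul4 a b x x) (isoMul4 a b x x))) ∧
    (∃ x : Quaternion ℝ,
        isoMul4 a b (isoMul4 a b (isoMul4 a b x x) x) x
          ≠ isoMul4 a b (isoMul4 a b x x) (isoMul4 a b x x)) ∧
    (∃ x : Quaternion ℝ,
        isoMul4 a b (isoMul4 a b (isoMul4 a b x x) (isoMul4 a b x x)) x
          ≠ isoMul4 a b (isoMul4 a b x x) (isoMul4 a b (isoMul4 a b x x) x)) := by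
  have hassoc : ∀ x y z : Quaternion ℝ, x * y * z = x * (y * z) := mul_assoc
  have hstm : ∀ x y : Quaternion ℝ, star (x * y) = star y * star x := fun x y => star_mul x y
  have hsts : ∀ x : Quaternion ℝ, star (star x) = x := star_star
  have hst1 : star (1 : Quaternion ℝ) = 1 := star_one _
  have hstn : ∀ x : Quaternion ℝ, star (-x) = -(star x) := star_neg
  have hmn : ∀ x y : Quaternion ℝ, x * -y = -(x * y) := fun x y => mul_neg x y
  have hnm : ∀ x y : Quaternion ℝ, -x * y = -(x * y) := fun x y => neg_mul x y
  have hnn : ∀ x : Quaternion ℝ, - -x = x := neg_neg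
  have h1m : ∀ x : Quaternion ℝ, 1 * x = x := one_mul
  have hm1 : ∀ x : Quaternion ℝ, x * 1 = x := mul_one
  have hpa : star a * a = 1 := by
    rw [Quaternion.star_mul_self]; simp [Quaternion.normSq_eq_norm_mul_self, ha]
  have hap : a * star a = 1 := by
    rw [Quaternion.self_mul_star]; simp [Quaternion.normSq_eq_norm_mul_self, ha]
  have hqb : star b * b = 1 := by
    rw [Quaternion.star_mul_self]; simp [Quaternion.normSq_eq_norm_mul_self, hb]
  have hbq : b * star b = 1 := by
    rw [Quaternion.self_mul_star]; simp [Quaternion.normSq_eq_norm_mul_self, hb]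
  have hpa' : ∀ t : Quaternion ℝ, star a * (a * t) = t := fun t => by
    rw [← mul_assoc, hpa, one_mul]
  have hap' : ∀ t : Quaternion ℝ, a * (star a * t) = t := fun t => by
    rw [← mul_assoc, hap, one_mul]
  have hbq' : ∀ t : Quaternion ℝ, b * (star b * t) = t := fun t => by
    rw [← mul_assoc, hbq, one_mul]
  have hqb' : ∀ t : Quaternion ℝ, star b * (b * t) = t := fun t => by
    rw [← mul_assoc, hqb, one_mul]
  have hnw : ‖star b * (a * b)‖ = (1 : ℝ) := by
    rw [norm_mul, norm_mul, norm_star, ha, hb]; norm_num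
  have hnv : ‖a * (b * star a)‖ = (1 : ℝ) := by
    rw [norm_mul, norm_mul, norm_star, ha, hb]; norm_num
  refine ⟨?_, ?_, ?_, ?_⟩
  · by_contra hcon
    push_neg at hcon
    simp only [isoMul4] at hcon
    have RI := gkey1 a b hassoc hstm hsts hst1 hstn hmn hnm hnn h1m hm1 hpa' hbq' hpa hbq
      qI sq_qI star_qI (hcon 1) (hcon qI)
    have RJ := gkey1 a b hassoc hstm hsts hst1 hstn hmn hnm hnn h1m hm1 hpa' hbq' hpa hbq
      qJ sq_qJ star_qJ (hcon 1) (hcon qJ)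
    have RK := gkey1 a b hassoc hstm hsts hst1 hstn hmn hnm hnn h1m hm1 hpa' hbq' hpa hbq
      qK sq_qK star_qK (hcon 1) (hcon qK)
    have hw := eq_zero_of_eq_neg _
      (anti0 hassoc hmn hnm hnn qI qJ qK _ mul_qIJ sq_qK RI RJ RK)
    rw [hw] at hnw
    simp at hnw
  · by_contra hcon
    push_neg at hcon
    simp only [isoMul4] at hcon
    have RI := gkey2 a b hassoc hstm hsts hst1 hstn hmn hnm hnn h1m hm1 hpa' hap' hbq' hqb'
      hpa hap hqb hbq qI sq_qI star_qI (hcon 1) (hcon qI)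
    have RJ := gkey2 a b hassoc hstm hsts hst1 hstn hmn hnm hnn h1m hm1 hpa' hap' hbq' hqb'
      hpa hap hqb hbq qJ sq_qJ star_qJ (hcon 1) (hcon qJ)
    have RK := gkey2 a b hassoc hstm hsts hst1 hstn hmn hnm hnn h1m hm1 hpa' hap' hbq' hqb'
      hpa hap hqb hbq qK sq_qK star_qK (hcon 1) (hcon qK)
    have hw := eq_zero_of_eq_neg _
      (anti0 hassoc hmn hnm hnn qI qJ qK _ mul_qIJ sq_qK RI RJ RK)
    rw [hw] at hnw
    simp at hnw
  · by_contra hcon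
    push_neg at hcon
    simp only [isoMul4] at hcon
    have RI := gkey3 a b hassoc hstm hsts hst1 hstn hmn hnm hnn h1m hm1 hpa' hbq' hqb'
      hpa hqb hbq qI sq_qI star_qI (hcon 1) (hcon qI)
    have RJ := gkey3 a b hassoc hstm hsts hst1 hstn hmn hnm hnn h1m hm1 hpa' hbq' hqb'
      hpa hqb hbq qJ sq_qJ star_qJ (hcon 1) (hcon qJ)
    have RK := gkey3 a b hassoc hstm hsts hst1 hstn hmn hnm hnn h1m hm1 hpa' hbq' hqb'
      hpa hqb hbq qK sq_qK star_qK (hcon 1) (hcon qK)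
    have hw := eq_zero_of_eq_neg _
      (anti0 hassoc hmn hnm hnn qI qJ qK _ mul_qIJ sq_qK RI RJ RK)
    rw [hw] at hnv
    simp at hnv
  · by_contra hcon
    push_neg at hcon
    simp only [isoMul4] at hcon
    have RI := gkey4 a b hassoc hstm hsts hst1 hstn hmn hnm hnn h1m hm1 hpa' hap' hbq' hqb'
      hpa hap hqb hbq qI sq_qI star_qI (hcon 1) (hcon qI)
    have RJ := gkey4 a b hassoc hstm hsts hst1 hstn hmn hnm hnn h1m hm1 hpa' hap' hbq' hqb'
      hpa hap hqb hbq qJ sq_qJ star_qJ (hcon 1) (hcon qJ)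
    have RK := gkey4 a b hassoc hstm hsts hst1 hstn hmn hnm hnn h1m hm1 hpa' hap' hbq' hqb'
      hpa hap hqb hbq qK sq_qK star_qK (hcon 1) (hcon qK)
    have hw := eq_zero_of_eq_neg _
      (anti0 hassoc hmn hnm hnn qI qJ qK _ mul_qIJ sq_qK RI RJ RK)
    rw [hw] at hnv
    simp at hnv
end

section
/- Let a, b be norm-one quaternions and let ⁎ℍ(a,b) be the algebra on ℍ with product x⊙y = a x̄ ȳ b. Then ⁎ℍ(a,b) satisfies the identity (x, x², x) = 0 (i.e. (x⊙(x⊙x))⊙x = x⊙((x⊙x)⊙x) for all x ∈ ℍ) if and only if a ∈ {1,−1} and b ∈ {1,−1}. -/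
open Quaternion

private def qmk (w x y z : ℝ) : Quaternion ℝ := ⟨w,x,y,z⟩

@[simp] private theorem qmk_re (w x y z : ℝ) : (qmk w x y z).re = w := rfl
@[simp] private theorem qmk_imI (w x y z : ℝ) : (qmk w x y z).imI = x := rfl
@[simp] private theorem qmk_imJ (w x y z : ℝ) : (qmk w x y z).imJ = y := rfl
@[simp] private theorem qmk_imK (w x y z : ℝ) : (qmk w x y z).imK = z := rfl

private theorem unit_right {a : Quaternion ℝ} (ha : ‖a‖ = 1) : a * star a = 1 := by
  rw [Quaternion.self_mul_star, Quaternion.normSq_eq_norm_mul_self, ha, one_mul]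
  exact Quaternion.coe_one

private theorem unit_left {a : Quaternion ℝ} (ha : ‖a‖ = 1) : star a * a = 1 := by
  rw [Quaternion.star_mul_self, Quaternion.normSq_eq_norm_mul_self, ha, one_mul]
  exact Quaternion.coe_one

private theorem normSq_coords {a : Quaternion ℝ} (ha : ‖a‖ = 1) :
    a.re^2 + a.imI^2 + a.imJ^2 + a.imK^2 = 1 := by
  have := Quaternion.normSq_eq_norm_mul_self a
  rw [ha, one_mul] at this
  rw [← Quaternion.normSq_def', this]

private theorem mulConj (g x y : Quaternion ℝ) (hg : g ≠ 0) :
    (g * x * g⁻¹) * (g * y * g⁻¹) = g * (x * y) * g⁻¹ := by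
  have hgi : g⁻¹ * g = 1 := inv_mul_cancel₀ hg
  simp only [mul_assoc]
  rw [← mul_assoc g⁻¹ g, hgi, one_mul]

theorem starConj (g x : Quaternion ℝ) (hg : g ≠ 0) :
    star (g * x * g⁻¹) = g * star x * g⁻¹ := by
  set k : ℝ := Quaternion.normSq g with hk
  have hkq : ((k : ℝ) : Quaternion ℝ) ≠ 0 := by
    rw [ne_eq, ← Quaternion.coe_zero, Quaternion.coe_inj]
    exact (Quaternion.normSq_ne_zero).mpr hg
  have h1 : star g = (k : Quaternion ℝ) * g⁻¹ := by
    rw [hk, ← Quaternion.star_mul_self, mul_assoc, mul_inv_cancel₀ hg, mul_one]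
  have h2 : star g⁻¹ = ((k : Quaternion ℝ))⁻¹ * g := by
    rw [star_inv₀, h1, mul_inv_rev, inv_inv, ((Quaternion.coe_commute k g).inv_left₀).eq]
  rw [star_mul, star_mul, h1, h2]
  calc (↑k)⁻¹ * g * (star x * (↑k * g⁻¹))
      = (↑k)⁻¹ * (g * (↑k * (star x * g⁻¹))) := by
        rw [mul_assoc, ← mul_assoc (star x), ((Quaternion.coe_commute k (star x)).symm).eq,
          mul_assoc]
    _ = (↑k)⁻¹ * (↑k * (g * (star x * g⁻¹))) := by
        rw [← mul_assoc g, ((Quaternion.coe_commute k g).symm).eq, mul_assoc]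
    _ = g * star x * g⁻¹ := by
        rw [← mul_assoc, inv_mul_cancel₀ hkq, one_mul, ← mul_assoc]

theorem isoConj (g a b x y : Quaternion ℝ) (hg : g ≠ 0) :
    isoMul4 (g*a*g⁻¹) (g*b*g⁻¹) (g*x*g⁻¹) (g*y*g⁻¹) = g * isoMul4 a b x y * g⁻¹ := by
  unfold isoMul4
  rw [starConj g x hg, starConj g y hg]
  have hgi : g⁻¹ * g = 1 := inv_mul_cancel₀ hg
  simp only [mul_assoc]
  rw [← mul_assoc g⁻¹ g, hgi, one_mul, ← mul_assoc g⁻¹ g, hgi, one_mul,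
    ← mul_assoc g⁻¹ g, hgi, one_mul]

theorem idenTransfer (g a b : Quaternion ℝ) (hg : g ≠ 0)
    (h : ∀ x : Quaternion ℝ,
        isoMul4 a b (isoMul4 a b x (isoMul4 a b x x)) x
          = isoMul4 a b x (isoMul4 a b (isoMul4 a b x x) x)) :
    ∀ x : Quaternion ℝ,
        isoMul4 (g*a*g⁻¹) (g*b*g⁻¹) (isoMul4 (g*a*g⁻¹) (g*b*g⁻¹) x (isoMul4 (g*a*g⁻¹) (g*b*g⁻¹) x x)) x
          = isoMul4 (g*a*g⁻¹) (g*b*g⁻¹) x (isoMul4 (g*a*g⁻¹) (g*b*g⁻¹) (isoMul4 (g*a*g⁻¹) (g*b*g⁻¹) x x) x) := by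
  intro x
  have hx : x = g * (g⁻¹ * x * g) * g⁻¹ := by
    rw [mul_assoc, mul_assoc, mul_inv_cancel₀ hg, mul_one, ← mul_assoc,
      mul_inv_cancel₀ hg, one_mul]
  rw [hx]
  simp only [isoConj g a b _ _ hg]
  rw [h]

theorem commAB (a b : Quaternion ℝ) (ha1 : a * star a = 1) (ha2 : star a * a = 1)
    (hb1 : b * star b = 1) (hb2 : star b * b = 1)
    (h : ∀ x : Quaternion ℝ,
        isoMul4 a b (isoMul4 a b x (isoMul4 a b x x)) x
          = isoMul4 a b x (isoMul4 a b (isoMul4 a b x x) x)) :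
    a * b = b * a := by
  have smul : ∀ x y : Quaternion ℝ, star (x*y) = star y * star x := fun x y => star_mul x y
  have sstar : ∀ x : Quaternion ℝ, star (star x) = x := fun x => star_star x
  have massoc : ∀ x y z : Quaternion ℝ, x * y * z = x * (y * z) := fun x y z => mul_assoc x y z
  have aL : ∀ t : Quaternion ℝ, a * (star a * t) = t := by
    intro t; rw [← mul_assoc, ha1, one_mul]
  have aR : ∀ t : Quaternion ℝ, star a * (a * t) = t := by
    intro t; rw [← mul_assoc, ha2, one_mul]
  have bL : ∀ t : Quaternion ℝ, b * (star b * t) = t := by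
    intro t; rw [← mul_assoc, hb1, one_mul]
  have bR : ∀ t : Quaternion ℝ, star b * (b * t) = t := by
    intro t; rw [← mul_assoc, hb2, one_mul]
  have e := h (star b)
  simp only [isoMul4] at e
  simp only [smul, sstar] at e
  have e2 := congrArg
    (fun t : Quaternion ℝ => star b * (star b * (star a * (b * (star a * (t * star b)))))) e
  simp only [massoc, aL, aR, bL, bR, ha1, ha2, hb1, hb2, mul_one, one_mul] at e2
  have e3 := congrArg (fun t : Quaternion ℝ => a * (t * a)) e2
  simp only [massoc, aL, aR, ha1, ha2, mul_one, one_mul] at e3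
  exact e3.symm

theorem exists_g (c : Quaternion ℝ) :
    ∃ g : Quaternion ℝ, g ≠ 0 ∧
      g * c = qmk c.re (Real.sqrt (c.imI^2 + c.imJ^2 + c.imK^2)) 0 0 * g := by
  set n : ℝ := Real.sqrt (c.imI^2 + c.imJ^2 + c.imK^2) with hn
  have hn2 : n^2 = c.imI^2 + c.imJ^2 + c.imK^2 := Real.sq_sqrt (by positivity)
  by_cases hc : c.imI = -n ∧ c.imJ = 0 ∧ c.imK = 0
  · refine ⟨qmk 0 0 1 0, ?_, ?_⟩
    · intro h0
      simpa using congrArg QuaternionAlgebra.imJ h0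
    · obtain ⟨h1, h2, h3⟩ := hc
      ext <;>
        simp only [Quaternion.re_mul, Quaternion.imI_mul, Quaternion.imJ_mul,
          Quaternion.imK_mul, qmk_re, qmk_imI, qmk_imJ, qmk_imK, h1, h2, h3] <;> ring
  · refine ⟨qmk 0 (c.imI + n) c.imJ c.imK, ?_, ?_⟩
    · intro h0
      apply hc
      have h1 := congrArg QuaternionAlgebra.imI h0
      have h2 := congrArg QuaternionAlgebra.imJ h0
      have h3 := congrArg QuaternionAlgebra.imK h0
      simp only [qmk_imI, qmk_imJ, qmk_imK, Quaternion.imI_zero, Quaternion.imJ_zero,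
        Quaternion.imK_zero] at h1 h2 h3
      refine ⟨by linarith, h2, h3⟩
    · ext <;>
        simp only [Quaternion.re_mul, Quaternion.imI_mul, Quaternion.imJ_mul,
          Quaternion.imK_mul, qmk_re, qmk_imI, qmk_imJ, qmk_imK] <;>
        nlinarith [hn2]

set_option maxHeartbeats 2000000 in
theorem complexCase (p q r s : ℝ) (hpq : p^2 + q^2 = 1) (hrs : r^2 + s^2 = 1)
    (h : ∀ x : Quaternion ℝ,
        isoMul4 (qmk p q 0 0) (qmk r s 0 0) (isoMul4 (qmk p q 0 0) (qmk r s 0 0) x (isoMul4 (qmk p q 0 0) (qmk r s 0 0) x x)) x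
          = isoMul4 (qmk p q 0 0) (qmk r s 0 0) x (isoMul4 (qmk p q 0 0) (qmk r s 0 0) (isoMul4 (qmk p q 0 0) (qmk r s 0 0) x x) x)) :
    q = 0 ∧ s = 0 := by
  have hw1A : isoMul4 (qmk p q 0 0) (qmk r s 0 0) (qmk (0) (1) (1) (0)) (qmk (0) (1) (1) (0)) = qmk ((2)*q*s + (-2)*p*r) ((-2)*q*r + (-2)*p*s) (0) (0) := by
    ext <;> simp only [isoMul4, Quaternion.re_mul, Quaternion.imI_mul, Quaternion.imJ_mul, Quaternion.imK_mul, Quaternion.re_star, Quaternion.imI_star, Quaternion.imJ_star, Quaternion.imK_star, qmk_re, qmk_imI, qmk_imJ, qmk_imK] <;> ring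
  have hw2A : isoMul4 (qmk p q 0 0) (qmk r s 0 0) (qmk (0) (1) (1) (0)) (qmk ((2)*q*s + (-2)*p*r) ((-2)*q*r + (-2)*p*s) (0) (0)) = qmk (0) ((2)*q*q*s*s + (2)*q*q*r*r + (2)*p*p*s*s + (2)*p*p*r*r) ((-2)*q*q*s*s + (-2)*q*q*r*r + (2)*p*p*s*s + (2)*p*p*r*r) ((4)*p*q*s*s + (4)*p*q*r*r) := by
    ext <;> simp only [isoMul4, Quaternion.re_mul, Quaternion.imI_mul, Quaternion.imJ_mul, Quaternion.imK_mul, Quaternion.re_star, Quaternion.imI_star, Quaternion.imJ_star, Quaternion.imK_star, qmk_re, qmk_imI, qmk_imJ, qmk_imK] <;> ring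
  have hw3A : isoMul4 (qmk p q 0 0) (qmk r s 0 0) (qmk ((2)*q*s + (-2)*p*r) ((-2)*q*r + (-2)*p*s) (0) (0)) (qmk (0) (1) (1) (0)) = qmk (0) ((2)*q*q*s*s + (2)*q*q*r*r + (2)*p*p*s*s + (2)*p*p*r*r) ((-2)*q*q*s*s + (2)*q*q*r*r + (-2)*p*p*s*s + (2)*p*p*r*r) ((-4)*q*q*r*s + (-4)*p*p*r*s) := by
    ext <;> simp only [isoMul4, Quaternion.re_mul, Quaternion.imI_mul, Quaternion.imJ_mul, Quaternion.imK_mul, Quaternion.re_star, Quaternion.imI_star, Quaternion.imJ_star, Quaternion.imK_star, qmk_re, qmk_imI, qmk_imJ, qmk_imK] <;> ring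
  have hLA : isoMul4 (qmk p q 0 0) (qmk r s 0 0) (qmk (0) ((2)*q*q*s*s + (2)*q*q*r*r + (2)*p*p*s*s + (2)*p*p*r*r) ((-2)*q*q*s*s + (-2)*q*q*r*r + (2)*p*p*s*s + (2)*p*p*r*r) ((4)*p*q*s*s + (4)*p*q*r*r)) (qmk (0) (1) (1) (0)) = qmk ((4)*p*q*q*r*s*s + (4)*p*q*q*r*r*r + (8)*p*p*q*s*s*s + (8)*p*p*q*r*r*s + (-4)*p*p*p*r*s*s + (-4)*p*p*p*r*r*r) ((4)*p*q*q*s*s*s + (4)*p*q*q*r*r*s + (-8)*p*p*q*r*s*s + (-8)*p*p*q*r*r*r + (-4)*p*p*p*s*s*s + (-4)*p*p*p*r*r*s) ((-4)*q*q*q*r*s*s + (-4)*q*q*q*r*r*r + (8)*p*q*q*s*s*s + (8)*p*q*q*r*r*s + (4)*p*p*q*r*s*s + (4)*p*p*q*r*r*r) ((4)*q*q*q*s*s*s + (4)*q*q*q*r*r*s + (8)*p*q*q*r*s*s + (8)*p*q*q*r*r*r + (-4)*p*p*q*s*s*s + (-4)*p*p*q*r*r*s) := by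
    ext <;> simp only [isoMul4, Quaternion.re_mul, Quaternion.imI_mul, Quaternion.imJ_mul, Quaternion.imK_mul, Quaternion.re_star, Quaternion.imI_star, Quaternion.imJ_star, Quaternion.imK_star, qmk_re, qmk_imI, qmk_imJ, qmk_imK] <;> ring
  have hRA : isoMul4 (qmk p q 0 0) (qmk r s 0 0) (qmk (0) (1) (1) (0)) (qmk (0) ((2)*q*q*s*s + (2)*q*q*r*r + (2)*p*p*s*s + (2)*p*p*r*r) ((-2)*q*q*s*s + (2)*q*q*r*r + (-2)*p*p*s*s + (2)*p*p*r*r) ((-4)*q*q*r*s + (-4)*p*p*r*s)) = qmk ((8)*q*q*q*r*r*s + (4)*p*q*q*r*s*s + (-4)*p*q*q*r*r*r + (8)*p*p*q*r*r*s + (4)*p*p*p*r*s*s + (-4)*p*p*p*r*r*r) ((4)*q*q*q*r*s*s + (-4)*q*q*q*r*r*r + (-8)*p*q*q*r*r*s + (4)*p*p*q*r*s*s + (-4)*p*p*q*r*r*r + (-8)*p*p*p*r*r*s) ((8)*q*q*q*r*s*s + (-4)*p*q*q*s*s*s + (4)*p*q*q*r*r*s + (8)*p*p*q*r*s*s + (-4)*p*p*p*s*s*s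 + (4)*p*p*p*r*r*s) ((-4)*q*q*q*s*s*s + (4)*q*q*q*r*r*s + (-8)*p*q*q*r*s*s + (-4)*p*p*q*s*s*s + (4)*p*p*q*r*r*s + (-8)*p*p*p*r*s*s) := by
    ext <;> simp only [isoMul4, Quaternion.re_mul, Quaternion.imI_mul, Quaternion.imJ_mul, Quaternion.imK_mul, Quaternion.re_star, Quaternion.imI_star, Quaternion.imJ_star, Quaternion.imK_star, qmk_re, qmk_imI, qmk_imJ, qmk_imK] <;> ring
  have eA := h (qmk (0) (1) (1) (0))
  rw [hw1A, hw2A, hw3A, hLA, hRA] at eA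
  have hw1B : isoMul4 (qmk p q 0 0) (qmk r s 0 0) (qmk (1) (0) (1) (0)) (qmk (1) (0) (1) (0)) = qmk (0) (0) ((-2)*q*s + (-2)*p*r) ((-2)*q*r + (2)*p*s) := by
    ext <;> simp only [isoMul4, Quaternion.re_mul, Quaternion.imI_mul, Quaternion.imJ_mul, Quaternion.imK_mul, Quaternion.re_star, Quaternion.imI_star, Quaternion.imJ_star, Quaternion.imK_star, qmk_re, qmk_imI, qmk_imJ, qmk_imK] <;> ring
  have hw2B : isoMul4 (qmk p q 0 0) (qmk r s 0 0) (qmk (1) (0) (1) (0)) (qmk (0) (0) ((-2)*q*s + (-2)*p*r) ((-2)*q*r + (2)*p*s)) = qmk ((-2)*q*q*s*s + (2)*q*q*r*r + (-2)*p*p*s*s + (2)*p*p*r*r) ((4)*q*q*r*s + (4)*p*p*r*s) ((2)*q*q*s*s + (-2)*q*q*r*r + (8)*p*q*r*s + (-2)*p*p*s*s + (2)*p*p*r*r) ((4)*q*q*r*s + (-4)*p*q*s*s + (4)*p*q*r*r + (-4)*p*p*r*s) := by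
    ext <;> simp only [isoMul4, Quaternion.re_mul, Quaternion.imI_mul, Quaternion.imJ_mul, Quaternion.imK_mul, Quaternion.re_star, Quaternion.imI_star, Quaternion.imJ_star, Quaternion.imK_star, qmk_re, qmk_imI, qmk_imJ, qmk_imK] <;> ring
  have hw3B : isoMul4 (qmk p q 0 0) (qmk r s 0 0) (qmk (0) (0) ((-2)*q*s + (-2)*p*r) ((-2)*q*r + (2)*p*s)) (qmk (1) (0) (1) (0)) = qmk ((-2)*q*q*s*s + (-2)*q*q*r*r + (2)*p*p*s*s + (2)*p*p*r*r) ((4)*p*q*s*s + (4)*p*q*r*r) ((2)*q*q*s*s + (-2)*q*q*r*r + (8)*p*q*r*s + (-2)*p*p*s*s + (2)*p*p*r*r) ((4)*q*q*r*s + (-4)*p*q*s*s + (4)*p*q*r*r + (-4)*p*p*r*s) := by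
    ext <;> simp only [isoMul4, Quaternion.re_mul, Quaternion.imI_mul, Quaternion.imJ_mul, Quaternion.imK_mul, Quaternion.re_star, Quaternion.imI_star, Quaternion.imJ_star, Quaternion.imK_star, qmk_re, qmk_imI, qmk_imJ, qmk_imK] <;> ring
  have hLB : isoMul4 (qmk p q 0 0) (qmk r s 0 0) (qmk ((-2)*q*q*s*s + (2)*q*q*r*r + (-2)*p*p*s*s + (2)*p*p*r*r) ((4)*q*q*r*s + (4)*p*p*r*s) ((2)*q*q*s*s + (-2)*q*q*r*r + (8)*p*q*r*s + (-2)*p*p*s*s + (2)*p*p*r*r) ((4)*q*q*r*s + (-4)*p*q*s*s + (4)*p*q*r*r + (-4)*p*p*r*s)) (qmk (1) (0) (1) (0)) = qmk ((4)*q*q*q*s*s*s + (4)*q*q*q*r*r*s + (8)*p*q*q*r*s*s + (8)*p*q*q*r*r*r + (-4)*p*p*q*s*s*s + (-4)*p*p*q*r*r*s) ((4)*q*q*q*r*s*s + (4)*q*q*q*r*r*r + (-8)*p*q*q*s*s*s + (-8)*p*q*q*r*r*s + (-4)*p*p*q*r*s*s + (-4)*p*p*q*r*r*r) ((-12)*p*q*q*r*s*s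 + (4)*p*q*q*r*r*r + (8)*p*p*q*s*s*s + (-24)*p*p*q*r*r*s + (12)*p*p*p*r*s*s + (-4)*p*p*p*r*r*r) ((4)*p*q*q*s*s*s + (-12)*p*q*q*r*r*s + (24)*p*p*q*r*s*s + (-8)*p*p*q*r*r*r + (-4)*p*p*p*s*s*s + (12)*p*p*p*r*r*s) := by
    ext <;> simp only [isoMul4, Quaternion.re_mul, Quaternion.imI_mul, Quaternion.imJ_mul, Quaternion.imK_mul, Quaternion.re_star, Quaternion.imI_star, Quaternion.imJ_star, Quaternion.imK_star, qmk_re, qmk_imI, qmk_imJ, qmk_imK] <;> ring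
  have hRB : isoMul4 (qmk p q 0 0) (qmk r s 0 0) (qmk (1) (0) (1) (0)) (qmk ((-2)*q*q*s*s + (-2)*q*q*r*r + (2)*p*p*s*s + (2)*p*p*r*r) ((4)*p*q*s*s + (4)*p*q*r*r) ((2)*q*q*s*s + (-2)*q*q*r*r + (8)*p*q*r*s + (-2)*p*p*s*s + (2)*p*p*r*r) ((4)*q*q*r*s + (-4)*p*q*s*s + (4)*p*q*r*r + (-4)*p*p*r*s)) = qmk ((4)*q*q*q*s*s*s + (-4)*q*q*q*r*r*s + (8)*p*q*q*r*s*s + (4)*p*p*q*s*s*s + (-4)*p*p*q*r*r*s + (8)*p*p*p*r*s*s) ((-8)*q*q*q*r*s*s + (4)*p*q*q*s*s*s + (-4)*p*q*q*r*r*s + (-8)*p*p*q*r*s*s + (4)*p*p*p*s*s*s + (-4)*p*p*p*r*r*s) ((8)*q*q*q*r*r*s + (-12)*p*q*q*r*s*s + (12)*p*q*q*r*r*r + (-24)*p*p*q*r*r*s + (4)*p*p*p*r*s*s + (-4)*p*p*p*r*r*r) ((-4)*q*q*q*r*s*s + (4)*q*q*q*r*r*r + (-24)*p*q*q*r*r*s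 + (12)*p*p*q*r*s*s + (-12)*p*p*q*r*r*r + (8)*p*p*p*r*r*s) := by
    ext <;> simp only [isoMul4, Quaternion.re_mul, Quaternion.imI_mul, Quaternion.imJ_mul, Quaternion.imK_mul, Quaternion.re_star, Quaternion.imI_star, Quaternion.imJ_star, Quaternion.imK_star, qmk_re, qmk_imI, qmk_imJ, qmk_imK] <;> ring
  have eB := h (qmk (1) (0) (1) (0))
  rw [hw1B, hw2B, hw3B, hLB, hRB] at eB

  have eij2 : _ = _ := congrArg QuaternionAlgebra.imJ eA
  have eij3 : _ = _ := congrArg QuaternionAlgebra.imK eA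
  have e1j3 : _ = _ := congrArg QuaternionAlgebra.imK eB
  have e1j0 : _ = _ := congrArg QuaternionAlgebra.re eB
  simp only [qmk_re, qmk_imI, qmk_imJ, qmk_imK] at eij2 eij3 e1j3 e1j0
  have K1 : (q*r - p*s)*(1 - 2*(q^2+s^2)) = 0 := by
    linear_combination (1/4)*eij2 - (1/4)*(-4*q*r*s^2+4*q*r^3+4*p*s^3-4*p*r^2*s)*hpq
      - (1/4)*(4*q*r-8*q^3*r-4*p*s+8*p*q^2*s)*hrs
  have K2 : (q^2+s^2)*(q*s+p*r) - q*s = 0 := by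
    linear_combination (1/8)*eij3 - (1/8)*(-8*q*r^2*s+8*p*r*s^2)*hpq
      - (1/8)*(-8*q*s+8*q^3*s+8*p*q^2*r)*hrs
  have K3 : (q*r + p*s) - 2*(q^2-s^2)*(q*r-p*s) = 0 := by
    linear_combination (1/4)*e1j3 - (1/4)*(12*q*r*s^2+4*q*r^3-4*p*s^3+4*p*r^2*s)*hpq
      - (1/4)*(4*q*r-8*q^3*r+4*p*s+8*p*q^2*s)*hrs
  have K4 : (q^2-s^2)*(q*s+p*r) = 0 := by
    linear_combination (1/8)*e1j0 - (1/8)*(-8*q*s^3-8*p*r*s^2)*hpq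
      - (1/8)*(8*q^3*s+8*p*q^2*r)*hrs
  clear hw1A hw2A hw3A hLA hRA hw1B hw2B hw3B hLB hRB eA eB eij2 eij3 e1j3 e1j0 h
  rcases mul_eq_zero.mp K1 with hE | hT
  · -- q*r - p*s = 0
    have hF : q*r + p*s = 0 := by linear_combination K3 + 2*(q^2-s^2)*hE
    have hqr : q*r = 0 := by linarith
    have hps : p*s = 0 := by linarith
    by_cases hq : q = 0
    · refine ⟨hq, ?_⟩
      have hp2 : p^2 = 1 := by nlinarith
      rcases mul_eq_zero.mp hps with hp | hs
      · exfalso; rw [hp] at hp2; norm_num at hp2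
      · exact hs
    · exfalso
      have hr : r = 0 := by
        rcases mul_eq_zero.mp hqr with h' | h'
        · exact absurd h' hq
        · exact h'
      have hs2 : s^2 = 1 := by nlinarith
      have hp : p = 0 := by
        rcases mul_eq_zero.mp hps with h' | h'
        · exact h'
        · exfalso; rw [h'] at hs2; norm_num at hs2
      have hq2 : q^2 = 1 := by nlinarith
      -- K2 becomes q*s*(q^2+s^2-1) = q*s = 0, contradiction
      rw [hp, hr] at K2
      have hqs : q*s = 0 := by linear_combination K2 - q*s*hq2 - q*s*hs2
      have h1 : q^2*s^2 = 1 := by rw [hq2, one_mul, hs2]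
      nlinarith [hqs, h1]
  · -- q^2+s^2 = 1/2
    have hT' : q^2 + s^2 = 1/2 := by linarith
    have hpr : p*r - q*s = 0 := by linear_combination 2*K2 - 2*(q*s+p*r)*hT'
    have K4' : (q^2-s^2)*(q*s) = 0 := by
      linear_combination (1/2)*K4 - (1/2)*(q^2-s^2)*hpr
    exfalso
    rcases mul_eq_zero.mp K4' with hD | hqs
    · have hq2 : q^2 = 1/4 := by linarith
      have hs2 : s^2 = 1/4 := by linarith
      have hp2 : p^2 = 3/4 := by linarith
      have hr2 : r^2 = 3/4 := by linarith
      have hpr' : p*r = q*s := by linarith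
      have h1 : (p*r)^2 = (q*s)^2 := by rw [hpr']
      have h2 : p^2*r^2 = 3/4*(3/4) := by rw [hp2, hr2]
      have h3 : q^2*s^2 = 1/4*(1/4) := by rw [hq2, hs2]
      nlinarith [h1, h2, h3]
    · rcases mul_eq_zero.mp hqs with hq | hs
      · -- q = 0, then s^2 = 1/2, p^2 = 1, p*r = 0 so r = 0, then r^2+s^2 = 1/2 ≠ 1
        have hs2 : s^2 = 1/2 := by nlinarith
        have hp2 : p^2 = 1 := by nlinarith
        have hpr0 : p*r = 0 := by nlinarith [hpr]
        rcases mul_eq_zero.mp hpr0 with hp | hr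
        · rw [hp] at hp2; norm_num at hp2
        · rw [hr] at hrs; nlinarith
      · have hq2 : q^2 = 1/2 := by nlinarith
        have hr2 : r^2 = 1 := by nlinarith
        have hpr0 : p*r = 0 := by nlinarith [hpr]
        rcases mul_eq_zero.mp hpr0 with hp | hr
        · rw [hp] at hpq; nlinarith
        · rw [hr] at hr2; norm_num at hr2

set_option maxHeartbeats 2000000 in
/-- For norm-one quaternions `a, b`, the algebra `⁎ℍ(a,b)` satisfies the identity
`(x, x², x) = 0` if and only if `a ∈ {1,-1}` and `b ∈ {1,-1}`. -/
theorem stmt_7 (a b : Quaternion ℝ) (ha : ‖a‖ = 1) (hb : ‖b‖ = 1) :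
    (∀ x : Quaternion ℝ,
        isoMul4 a b (isoMul4 a b x (isoMul4 a b x x)) x
          = isoMul4 a b x (isoMul4 a b (isoMul4 a b x x) x))
      ↔ ((a = 1 ∨ a = -1) ∧ (b = 1 ∨ b = -1)) := by
  constructor
  · intro h
    have ha1 := unit_right ha
    have ha2 := unit_left ha
    have hb1 := unit_right hb
    have hb2 := unit_left hb
    have comm : a * b = b * a := commAB a b ha1 ha2 hb1 hb2 h
    have hna := normSq_coords ha
    have hnb := normSq_coords hb
    -- Step 1: a has zero imaginary part
    have hA : a.imI^2 + a.imJ^2 + a.imK^2 = 0 := by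
      by_contra hA0
      set n : ℝ := Real.sqrt (a.imI^2 + a.imJ^2 + a.imK^2) with hn
      have hsumnn : 0 ≤ a.imI^2 + a.imJ^2 + a.imK^2 := by positivity
      have hn2 : n^2 = a.imI^2 + a.imJ^2 + a.imK^2 := Real.sq_sqrt hsumnn
      have hnne : n ≠ 0 := by
        intro h0
        rw [h0] at hn2
        exact hA0 (by linarith [hn2])
      obtain ⟨g, hg, hgc⟩ := exists_g a
      have hconjA : g * a * g⁻¹ = qmk a.re n 0 0 := by
        rw [hgc, mul_assoc, mul_inv_cancel₀ hg, mul_one]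
      set b' : Quaternion ℝ := g * b * g⁻¹ with hb'
      have hcomm' : qmk a.re n 0 0 * b' = b' * qmk a.re n 0 0 := by
        rw [← hconjA, hb', mulConj g a b hg, mulConj g b a hg, comm]
      have hbK : b'.imK = 0 := by
        have := congrArg QuaternionAlgebra.imJ hcomm'
        simp only [Quaternion.imJ_mul, qmk_re, qmk_imI, qmk_imJ, qmk_imK] at this
        have h2 : n * b'.imK = 0 := by linarith
        rcases mul_eq_zero.mp h2 with h' | h'
        · exact absurd h' hnne
        · exact h'
      have hbJ : b'.imJ = 0 := by
        have := congrArg QuaternionAlgebra.imK hcomm'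
        simp only [Quaternion.imK_mul, qmk_re, qmk_imI, qmk_imJ, qmk_imK] at this
        have h2 : n * b'.imJ = 0 := by linarith
        rcases mul_eq_zero.mp h2 with h' | h'
        · exact absurd h' hnne
        · exact h'
      have hconjB : g * b * g⁻¹ = qmk b'.re b'.imI 0 0 := by
        rw [← hb']
        ext <;> simp only [qmk_re, qmk_imI, qmk_imJ, qmk_imK, hbJ, hbK]
      have hnb' : ‖b'‖ = 1 := by
        rw [hb']
        rw [norm_mul, norm_mul, norm_inv, hb, mul_one, ← div_eq_mul_inv]
        exact div_self (norm_ne_zero_iff.mpr hg)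
      have hrs : b'.re^2 + b'.imI^2 = 1 := by
        have := normSq_coords hnb'
        rw [hbJ, hbK] at this
        linarith
      have hpq : a.re^2 + n^2 = 1 := by rw [hn2]; linarith
      have htrans := idenTransfer g a b hg h
      rw [hconjA, hconjB] at htrans
      have := complexCase a.re n b'.re b'.imI hpq hrs htrans
      exact hnne this.1
    -- Step 2: b has zero imaginary part
    have hB : b.imI^2 + b.imJ^2 + b.imK^2 = 0 := by
      by_contra hB0
      set m : ℝ := Real.sqrt (b.imI^2 + b.imJ^2 + b.imK^2) with hm
      have hsumnn : 0 ≤ b.imI^2 + b.imJ^2 + b.imK^2 := by positivity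
      have hm2 : m^2 = b.imI^2 + b.imJ^2 + b.imK^2 := Real.sq_sqrt hsumnn
      have hmne : m ≠ 0 := by
        intro h0
        rw [h0] at hm2
        exact hB0 (by linarith [hm2])
      obtain ⟨g, hg, hgc⟩ := exists_g b
      have hconjB : g * b * g⁻¹ = qmk b.re m 0 0 := by
        rw [hgc, mul_assoc, mul_inv_cancel₀ hg, mul_one]
      have haI : a.imI = 0 := by nlinarith [sq_nonneg a.imI, sq_nonneg a.imJ, sq_nonneg a.imK]
      have haJ : a.imJ = 0 := by nlinarith [sq_nonneg a.imI, sq_nonneg a.imJ, sq_nonneg a.imK]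
      have haK : a.imK = 0 := by nlinarith [sq_nonneg a.imI, sq_nonneg a.imJ, sq_nonneg a.imK]
      have haco : a = ((a.re : ℝ) : Quaternion ℝ) := by
        ext <;> simp only [Quaternion.re_coe, Quaternion.imI_coe, Quaternion.imJ_coe,
          Quaternion.imK_coe, haI, haJ, haK]
      have hconjA : g * a * g⁻¹ = qmk a.re 0 0 0 := by
        rw [haco, ← Quaternion.coe_commutes, mul_assoc, mul_inv_cancel₀ hg, mul_one]
        ext <;> simp only [qmk_re, qmk_imI, qmk_imJ, qmk_imK, Quaternion.re_coe,
          Quaternion.imI_coe, Quaternion.imJ_coe, Quaternion.imK_coe]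
      have hpq : a.re^2 + (0:ℝ)^2 = 1 := by
        simp only [ne_eq, OfNat.ofNat_ne_zero, not_false_eq_true, zero_pow]
        nlinarith [hna, hA, sq_nonneg a.imI]
      have hrs : b.re^2 + m^2 = 1 := by rw [hm2]; linarith
      have htrans := idenTransfer g a b hg h
      rw [hconjA, hconjB] at htrans
      have := complexCase a.re 0 b.re m hpq hrs htrans
      exact hmne this.2
    -- Conclude
    have haI : a.imI = 0 := by nlinarith [sq_nonneg a.imI, sq_nonneg a.imJ, sq_nonneg a.imK]
    have haJ : a.imJ = 0 := by nlinarith [sq_nonneg a.imI, sq_nonneg a.imJ, sq_nonneg a.imK]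
    have haK : a.imK = 0 := by nlinarith [sq_nonneg a.imI, sq_nonneg a.imJ, sq_nonneg a.imK]
    have hbI : b.imI = 0 := by nlinarith [sq_nonneg b.imI, sq_nonneg b.imJ, sq_nonneg b.imK]
    have hbJ : b.imJ = 0 := by nlinarith [sq_nonneg b.imI, sq_nonneg b.imJ, sq_nonneg b.imK]
    have hbK : b.imK = 0 := by nlinarith [sq_nonneg b.imI, sq_nonneg b.imJ, sq_nonneg b.imK]
    have hare : a.re = 1 ∨ a.re = -1 := by
      have : (a.re - 1) * (a.re + 1) = 0 := by nlinarith
      rcases mul_eq_zero.mp this with h' | h'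
      · left; linarith
      · right; linarith
    have hbre : b.re = 1 ∨ b.re = -1 := by
      have : (b.re - 1) * (b.re + 1) = 0 := by nlinarith
      rcases mul_eq_zero.mp this with h' | h'
      · left; linarith
      · right; linarith
    constructor
    · rcases hare with h' | h'
      · left; ext <;> simp [h', haI, haJ, haK]
      · right; ext <;> simp [h', haI, haJ, haK]
    · rcases hbre with h' | h'
      · left; ext <;> simp [h', hbI, hbJ, hbK]
      · right; ext <;> simp [h', hbI, hbJ, hbK]
  · rintro ⟨hA, hB⟩ x
    have hc : x * star x = star x * x := by
      rw [Quaternion.self_mul_star, Quaternion.star_mul_self]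
    have key : star x * star x * x * star x = star x * (x * (star x * star x)) := by
      rw [mul_assoc (star x) (star x) x, Quaternion.star_mul_self,
        ← mul_assoc x (star x) (star x), Quaternion.self_mul_star, mul_assoc]
    rcases hA with rfl | rfl <;> rcases hB with rfl | rfl <;>
      simp only [isoMul4, star_one, star_neg, one_mul, mul_one, mul_neg, neg_mul, neg_neg,
        star_mul, star_star] <;>
      simp only [key]
end

section
/- Let a, b be norm-one quaternions and let *ℍ(a,b) be the algebra on ℍ with product x⊙y = x̄ a y b. Then *ℍ(a,b) satisfies the identity (x², x, x²) = 0 (i.e. (x²⊙x)⊙x² = x²⊙(x⊙x²) for all x ∈ ℍ, where x² = x⊙x) if and only if a ∈ {1,−1} (b being an arbitrary norm-one quaternion). -/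
/-- The product of the principal isotope `*ℍ(a,b)`: `x ⊙ y = x̄ * a * y * b`. -/
noncomputable def isoMul2 (a b x y : Quaternion ℝ) : Quaternion ℝ := star x * a * y * b

open Quaternion

/-- Auxiliary: vectors parallel to a common nonzero vector are parallel. -/
lemma cross3 (w1 w2 w3 u1 u2 u3 v1 v2 v3 : ℝ)
    (hw : ¬(w1 = 0 ∧ w2 = 0 ∧ w3 = 0))
    (hu1 : w2*u3 - w3*u2 = 0) (hu2 : w3*u1 - w1*u3 = 0) (hu3 : w1*u2 - w2*u1 = 0)
    (hk1 : w2*v3 - w3*v2 = 0) (hk2 : w3*v1 - w1*v3 = 0) (hk3 : w1*v2 - w2*v1 = 0) :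
    u2*v3 - u3*v2 = 0 ∧ u3*v1 - u1*v3 = 0 ∧ u1*v2 - u2*v1 = 0 := by
  have hw' : w1 ≠ 0 ∨ w2 ≠ 0 ∨ w3 ≠ 0 := by
    by_contra hc; push_neg at hc; exact hw ⟨hc.1, hc.2.1, hc.2.2⟩
  rcases hw' with h | h | h
  · exact ⟨(mul_eq_zero.mp (by linear_combination v3 * hu3 + v2 * hu2 + u1 * hk1 :
        w1 * (u2*v3 - u3*v2) = 0)).resolve_left h,
      (mul_eq_zero.mp (by linear_combination (-v1) * hu2 + u1 * hk2 :
        w1 * (u3*v1 - u1*v3) = 0)).resolve_left h,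
      (mul_eq_zero.mp (by linear_combination u1 * hk3 - v1 * hu3 :
        w1 * (u1*v2 - u2*v1) = 0)).resolve_left h⟩
  · exact ⟨(mul_eq_zero.mp (by linear_combination u2 * hk1 - v2 * hu1 :
        w2 * (u2*v3 - u3*v2) = 0)).resolve_left h,
      (mul_eq_zero.mp (by linear_combination u2 * hk2 + v1 * hu1 + v3 * hu3 :
        w2 * (u3*v1 - u1*v3) = 0)).resolve_left h,
      (mul_eq_zero.mp (by linear_combination u2 * hk3 - v2 * hu3 :
        w2 * (u1*v2 - u2*v1) = 0)).resolve_left h⟩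
  · exact ⟨(mul_eq_zero.mp (by linear_combination u3 * hk1 - v3 * hu1 :
        w3 * (u2*v3 - u3*v2) = 0)).resolve_left h,
      (mul_eq_zero.mp (by linear_combination u3 * hk2 - v3 * hu2 :
        w3 * (u3*v1 - u1*v3) = 0)).resolve_left h,
      (mul_eq_zero.mp (by linear_combination u3 * hk3 + v2 * hu2 + v1 * hu1 :
        w3 * (u1*v2 - u2*v1) = 0)).resolve_left h⟩

/-- Auxiliary real-variable lemma: the imaginary part of `a` vanishes. -/
lemma main_real (al p q r w1 w2 w3 : ℝ)
    (hw : ¬(w1 = 0 ∧ w2 = 0 ∧ w3 = 0))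
    (hi1 : w2*(-(p*q)) - w3*(p*r) = 0)
    (hi2 : w3*(p*al) - w1*(-(p*q)) = 0)
    (hi3 : w1*(p*r) - w2*(p*al) = 0)
    (hj1 : w2*(q*p) - w3*(q*al) = 0)
    (hj2 : w3*(-(q*r)) - w1*(q*p) = 0)
    (hj3 : w1*(q*al) - w2*(-(q*r)) = 0)
    (hk1 : w2*(r*al) - w3*(-(r*p)) = 0)
    (hk2 : w3*(r*q) - w1*(r*al) = 0)
    (hk3 : w1*(-(r*p)) - w2*(r*q) = 0)
    (hij1 : w2*(p^2-q^2) - w3*((p+q)*(al+r)) = 0)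
    (hij2 : w3*((p+q)*(al-r)) - w1*(p^2-q^2) = 0)
    (hij3 : w1*((p+q)*(al+r)) - w2*((p+q)*(al-r)) = 0)
    (hik1 : w2*((p+r)*(al-q)) - w3*(r^2-p^2) = 0)
    (hik2 : w3*((p+r)*(al+q)) - w1*((p+r)*(al-q)) = 0)
    (hik3 : w1*(r^2-p^2) - w2*((p+r)*(al+q)) = 0)
    (hjk1 : w2*((q+r)*(al+p)) - w3*((q+r)*(al-p)) = 0)
    (hjk2 : w3*(q^2-r^2) - w1*((q+r)*(al+p)) = 0)
    (hjk3 : w1*((q+r)*(al-p)) - w2*(q^2-r^2) = 0) :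
    p = 0 ∧ q = 0 ∧ r = 0 := by
  obtain ⟨cij1, cij2, cij3⟩ := cross3 w1 w2 w3 (p*al) (p*r) (-(p*q)) (-(q*r)) (q*al) (q*p)
    hw hi1 hi2 hi3 hj1 hj2 hj3
  obtain ⟨cik1, cik2, cik3⟩ := cross3 w1 w2 w3 (p*al) (p*r) (-(p*q)) (r*q) (-(r*p)) (r*al)
    hw hi1 hi2 hi3 hk1 hk2 hk3
  obtain ⟨cjk1, cjk2, cjk3⟩ := cross3 w1 w2 w3 (-(q*r)) (q*al) (q*p) (r*q) (-(r*p)) (r*al)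
    hw hj1 hj2 hj3 hk1 hk2 hk3
  obtain ⟨dij1, dij2, dij3⟩ := cross3 w1 w2 w3 (p*al) (p*r) (-(p*q))
    ((p+q)*(al-r)) ((p+q)*(al+r)) (p^2-q^2) hw hi1 hi2 hi3 hij1 hij2 hij3
  obtain ⟨dik1, dik2, dik3⟩ := cross3 w1 w2 w3 (p*al) (p*r) (-(p*q))
    ((p+r)*(al+q)) (r^2-p^2) ((p+r)*(al-q)) hw hi1 hi2 hi3 hik1 hik2 hik3
  obtain ⟨ejij1, ejij2, ejij3⟩ := cross3 w1 w2 w3 (-(q*r)) (q*al) (q*p)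
    ((p+q)*(al-r)) ((p+q)*(al+r)) (p^2-q^2) hw hj1 hj2 hj3 hij1 hij2 hij3
  obtain ⟨f1, f2, f3⟩ := cross3 w1 w2 w3 ((p+q)*(al-r)) ((p+q)*(al+r)) (p^2-q^2)
    ((p+r)*(al+q)) (r^2-p^2) ((p+r)*(al-q)) hw hij1 hij2 hij3 hik1 hik2 hik3
  obtain ⟨g1, g2, g3⟩ := cross3 w1 w2 w3 ((p+r)*(al+q)) (r^2-p^2) ((p+r)*(al-q))
    (q^2-r^2) ((q+r)*(al-p)) ((q+r)*(al+p)) hw hik1 hik2 hik3 hjk1 hjk2 hjk3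
  obtain ⟨e1, e2, e3⟩ := cross3 w1 w2 w3 (q^2-r^2) ((q+r)*(al-p)) ((q+r)*(al+p))
    ((p+q)*(al-r)) ((p+q)*(al+r)) (p^2-q^2) hw hjk1 hjk2 hjk3 hij1 hij2 hij3
  have sqz : ∀ s t : ℝ, s ^ 2 + t ^ 2 = 0 → s = 0 ∧ t = 0 := fun s t hst =>
    ⟨pow_eq_zero_iff (n := 2) (by norm_num) |>.mp
        (by linarith [sq_nonneg s, sq_nonneg t]),
      pow_eq_zero_iff (n := 2) (by norm_num) |>.mp
        (by linarith [sq_nonneg s, sq_nonneg t])⟩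
  by_cases hp : p = 0 <;> by_cases hq : q = 0
  · subst hp; subst hq
    by_cases hr : r = 0
    · exact ⟨rfl, rfl, hr⟩
    · exfalso
      have h' : r^2*(al^2+r^2) = 0 := by linear_combination g3
      have h2 := (mul_eq_zero.mp h').resolve_left (pow_ne_zero 2 hr)
      exact hr (sqz al r h2).2
  · subst hp
    exfalso
    by_cases hr : r = 0
    · subst hr
      have h' : q^2*(al^2+q^2) = 0 := by linear_combination e2
      have h2 := (mul_eq_zero.mp h').resolve_left (pow_ne_zero 2 hq)
      exact hq (sqz al q h2).2
    · have h' : (q*r)*al^2 = 0 := by linear_combination cjk1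
      have hal : al = 0 := by
        have := (mul_eq_zero.mp h').resolve_left (mul_ne_zero hq hr)
        exact pow_eq_zero_iff (n := 2) (by norm_num) |>.mp this
      subst hal
      have h'' : q^2*r^2 = 0 := by linear_combination -ejij3
      exact (mul_ne_zero (pow_ne_zero 2 hq) (pow_ne_zero 2 hr)) h''
  · subst hq
    exfalso
    by_cases hr : r = 0
    · subst hr
      have h' : p^2*(al^2+p^2) = 0 := by linear_combination f1
      have h2 := (mul_eq_zero.mp h').resolve_left (pow_ne_zero 2 hp)
      exact hp (sqz al p h2).2
    · have h' : (p*r)*al^2 = 0 := by linear_combination -cik2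
      have hal : al = 0 := by
        have := (mul_eq_zero.mp h').resolve_left (mul_ne_zero hp hr)
        exact pow_eq_zero_iff (n := 2) (by norm_num) |>.mp this
      subst hal
      have h'' : p^3*r = 0 := by linear_combination dij1
      exact (mul_ne_zero (pow_ne_zero 3 hp) hr) h''
  · exfalso
    have h' : (p*q)*(al^2+r^2) = 0 := by linear_combination cij3
    have h2 : al^2 + r^2 = 0 := (mul_eq_zero.mp h').resolve_left (mul_ne_zero hp hq)
    obtain ⟨hal, hr⟩ := sqz al r h2
    subst hal; subst hr
    have h'' : p^3*q = 0 := by linear_combination -dik1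
    exact (mul_ne_zero (pow_ne_zero 3 hp) hq) h''

/-- The key computation for the easy direction. -/
lemma key_iso (b x : Quaternion ℝ) :
    star (star (star x * x * b) * x * b) * (star x * x * b) * b
      = star (star x * x * b) * (star x * (star x * x * b) * b) * b := by
  have hn : ∀ y : Quaternion ℝ, star x * (x * y) = ((normSq x : ℝ) : Quaternion ℝ) * y := by
    intro y; rw [← mul_assoc, star_mul_self]
  simp only [star_mul, star_star, mul_assoc, hn, coe_mul_eq_smul, mul_smul_comm, smul_mul_assoc,
    smul_smul, Quaternion.star_smul]

def qqI : Quaternion ℝ := ⟨0,1,0,0⟩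
def qqJ : Quaternion ℝ := ⟨0,0,1,0⟩
def qqK : Quaternion ℝ := ⟨0,0,0,1⟩
def qqIJ : Quaternion ℝ := ⟨0,1,1,0⟩
def qqIK : Quaternion ℝ := ⟨0,1,0,1⟩
def qqJK : Quaternion ℝ := ⟨0,0,1,1⟩
def qq1I : Quaternion ℝ := ⟨1,1,0,0⟩
def qq1J : Quaternion ℝ := ⟨1,0,1,0⟩

set_option maxHeartbeats 2000000 in
/-- For norm-one quaternions `a, b`, the algebra `*ℍ(a,b)` satisfies the identity
`(x², x, x²) = 0` if and only if `a ∈ {1,-1}` (with `b` arbitrary). -/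
theorem stmt_15 (a b : Quaternion ℝ) (ha : ‖a‖ = 1) (hb : ‖b‖ = 1) :
    (∀ x : Quaternion ℝ,
        isoMul2 a b (isoMul2 a b (isoMul2 a b x x) x) (isoMul2 a b x x)
          = isoMul2 a b (isoMul2 a b x x) (isoMul2 a b x (isoMul2 a b x x)))
      ↔ (a = 1 ∨ a = -1) := by
  constructor
  · intro h
    have ha0 : a ≠ 0 := by intro e; rw [e] at ha; simp at ha
    have hb0 : b ≠ 0 := by intro e; rw [e] at hb; simp at hb
    -- Step 1: the cancelled identity
    have hE : ∀ x : Quaternion ℝ, x ≠ 0 →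
        (star x * a * x) * (b * (a * (star x * a * x)))
          = (x * a * star x) * ((a * (star x * a * x)) * b) := by
      intro x hx
      have h' := h x
      simp only [isoMul2] at h'
      have l1 : star (star (star x * a * x * b) * a * x * b) * a * (star x * a * x * b) * b
          = star b * (star x * (star a *
              (((star x * a * x) * (b * (a * (star x * a * x)))) * (b * b)))) := by
        simp only [star_mul, star_star, mul_assoc]
      have l2 : star (star x * a * x * b) * a * (star x * a * (star x * a * x * b) * b) * b
          = star b * (star x * (star a *
              (((x * a * star x) * ((a * (star x * a * x)) * b)) * (b * b)))) := by
        simp only [star_mul, star_star, mul_assoc]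
      rw [l1, l2] at h'
      have h1 := mul_left_cancel₀ (star_ne_zero.mpr hb0) h'
      have h2 := mul_left_cancel₀ (star_ne_zero.mpr hx) h1
      have h3 := mul_left_cancel₀ (star_ne_zero.mpr ha0) h2
      exact mul_right_cancel₀ (mul_ne_zero hb0 hb0) h3
    -- Step 2: commutation facts for imaginary x
    have hComm : ∀ t : Quaternion ℝ, t ≠ 0 → star t = -t →
        b * (a * (star t * a * t)) = (a * (star t * a * t)) * b := by
      intro t ht0 hst
      have e := hE t ht0
      have hA : t * a * star t = star t * a * t := by
        rw [hst]; simp [neg_mul, mul_neg]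
      rw [hA] at e
      exact mul_left_cancel₀
        (mul_ne_zero (mul_ne_zero (star_ne_zero.mpr ht0) ha0) ht0) e
    -- imaginary points
    have hI0 : qqI ≠ 0 := fun e => by simpa [qqI] using congrArg QuaternionAlgebra.imI e
    have hJ0 : qqJ ≠ 0 := fun e => by simpa [qqJ] using congrArg QuaternionAlgebra.imJ e
    have hK0 : qqK ≠ 0 := fun e => by simpa [qqK] using congrArg QuaternionAlgebra.imK e
    have hIJ0 : qqIJ ≠ 0 := fun e => by simpa [qqIJ] using congrArg QuaternionAlgebra.imI e
    have hIK0 : qqIK ≠ 0 := fun e => by simpa [qqIK] using congrArg QuaternionAlgebra.imI e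
    have hJK0 : qqJK ≠ 0 := fun e => by simpa [qqJK] using congrArg QuaternionAlgebra.imJ e
    have sI : star qqI = -qqI := by ext <;> simp <;> simp [qqI]
    have sJ : star qqJ = -qqJ := by ext <;> simp <;> simp [qqJ]
    have sK : star qqK = -qqK := by ext <;> simp <;> simp [qqK]
    have sIJ : star qqIJ = -qqIJ := by ext <;> simp <;> simp [qqIJ]
    have sIK : star qqIK = -qqIK := by ext <;> simp <;> simp [qqIK]
    have sJK : star qqJK = -qqJK := by ext <;> simp <;> simp [qqJK]
    -- main claim: imaginary part of a vanishes
    have himA : a.imI = 0 ∧ a.imJ = 0 ∧ a.imK = 0 := by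
      by_cases hw : b.imI = 0 ∧ b.imJ = 0 ∧ b.imK = 0
      · -- b is real
        obtain ⟨w1, w2, w3⟩ := hw
        have hbc : b = ((b.re : ℝ) : Quaternion ℝ) := by
          ext <;> simp [w1, w2, w3]
        have hAA : ∀ t : Quaternion ℝ, t ≠ 0 → star t * a * t = t * a * star t := by
          intro t ht
          have e := hE t ht
          rw [hbc] at e
          rw [show (a * (star t * a * t)) * ((b.re : ℝ) : Quaternion ℝ)
              = ((b.re : ℝ) : Quaternion ℝ) * (a * (star t * a * t)) from
            (Quaternion.coe_commutes _ _).symm] at e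
          rw [← mul_assoc (star t * a * t), ← mul_assoc (t * a * star t)] at e
          have hb0' : ((b.re : ℝ) : Quaternion ℝ) ≠ 0 := by rw [← hbc]; exact hb0
          have hAne : a * (star t * a * t) ≠ 0 :=
            mul_ne_zero ha0 (mul_ne_zero (mul_ne_zero (star_ne_zero.mpr ht) ha0) ht)
          have e' := mul_right_cancel₀ hAne e
          exact mul_right_cancel₀ hb0' e'
        have h1I0 : qq1I ≠ 0 := fun e => by simpa [qq1I] using congrArg QuaternionAlgebra.re e
        have h1J0 : qq1J ≠ 0 := fun e => by simpa [qq1J] using congrArg QuaternionAlgebra.re e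
        have eI := hAA qq1I h1I0
        have eJ := hAA qq1J h1J0
        have c1 := congrArg QuaternionAlgebra.imJ eI
        have c2 := congrArg QuaternionAlgebra.imK eI
        have c3 := congrArg QuaternionAlgebra.imK eJ
        simp only [Quaternion.imJ_mul, Quaternion.imK_mul, Quaternion.re_mul,
          Quaternion.imI_mul, Quaternion.re_star, Quaternion.imI_star, Quaternion.imJ_star,
          Quaternion.imK_star] at c1 c2 c3
        simp only [qq1I, qq1J] at c1 c2 c3
        refine ⟨by linarith, by linarith, by linarith⟩
      · -- b is not real
        have mkc : ∀ t : Quaternion ℝ, t ≠ 0 → star t = -t →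
            (b * (a * (star t * a * t))).imI = ((a * (star t * a * t)) * b).imI
            ∧ (b * (a * (star t * a * t))).imJ = ((a * (star t * a * t)) * b).imJ
            ∧ (b * (a * (star t * a * t))).imK = ((a * (star t * a * t)) * b).imK := by
          intro t h1 h2
          have := hComm t h1 h2
          exact ⟨congrArg QuaternionAlgebra.imI this, congrArg QuaternionAlgebra.imJ this,
            congrArg QuaternionAlgebra.imK this⟩
        obtain ⟨cI1, cI2, cI3⟩ := mkc qqI hI0 sI
        obtain ⟨cJ1, cJ2, cJ3⟩ := mkc qqJ hJ0 sJ
        obtain ⟨cK1, cK2, cK3⟩ := mkc qqK hK0 sK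
        obtain ⟨cIJ1, cIJ2, cIJ3⟩ := mkc qqIJ hIJ0 sIJ
        obtain ⟨cIK1, cIK2, cIK3⟩ := mkc qqIK hIK0 sIK
        obtain ⟨cJK1, cJK2, cJK3⟩ := mkc qqJK hJK0 sJK
        simp only [Quaternion.imI_mul, Quaternion.imJ_mul, Quaternion.imK_mul,
          Quaternion.re_mul, Quaternion.re_star, Quaternion.imI_star, Quaternion.imJ_star,
          Quaternion.imK_star]
          at cI1 cI2 cI3 cJ1 cJ2 cJ3 cK1 cK2 cK3 cIJ1 cIJ2 cIJ3 cIK1 cIK2 cIK3 cJK1 cJK2 cJK3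
        simp only [qqI, qqJ, qqK, qqIJ, qqIK, qqJK]
          at cI1 cI2 cI3 cJ1 cJ2 cJ3 cK1 cK2 cK3 cIJ1 cIJ2 cIJ3 cIK1 cIK2 cIK3 cJK1 cJK2 cJK3
        exact main_real a.re a.imI a.imJ a.imK b.imI b.imJ b.imK hw
          (by linear_combination (1/4) * cI1)
          (by linear_combination (1/4) * cI2)
          (by linear_combination (1/4) * cI3)
          (by linear_combination (1/4) * cJ1)
          (by linear_combination (1/4) * cJ2)
          (by linear_combination (1/4) * cJ3)
          (by linear_combination (1/4) * cK1)
          (by linear_combination (1/4) * cK2)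
          (by linear_combination (1/4) * cK3)
          (by linear_combination (1/4) * cIJ1)
          (by linear_combination (1/4) * cIJ2)
          (by linear_combination (1/4) * cIJ3)
          (by linear_combination (1/4) * cIK1)
          (by linear_combination (1/4) * cIK2)
          (by linear_combination (1/4) * cIK3)
          (by linear_combination (1/4) * cJK1)
          (by linear_combination (1/4) * cJK2)
          (by linear_combination (1/4) * cJK3)
    obtain ⟨hp, hq, hr⟩ := himA
    have hnorm : a.re ^ 2 + a.imI ^ 2 + a.imJ ^ 2 + a.imK ^ 2 = 1 := by
      have h1 : normSq a = 1 := by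
        rw [Quaternion.normSq_eq_norm_mul_self, ha]; norm_num
      rw [Quaternion.normSq_def'] at h1
      exact h1
    have hre : (a.re - 1) * (a.re + 1) = 0 := by
      rw [hp, hq, hr] at hnorm; linear_combination hnorm
    rcases mul_eq_zero.mp hre with h1 | h1
    · left
      ext
      · simpa using sub_eq_zero.mp h1
      · simpa using hp
      · simpa using hq
      · simpa using hr
    · right
      ext
      · simpa using eq_neg_of_add_eq_zero_left h1
      · simpa using hp
      · simpa using hq
      · simpa using hr
  · rintro (rfl | rfl) <;> intro x
    · simp only [isoMul2, mul_one, one_mul]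
      exact key_iso b x
    · simp only [isoMul2, mul_neg, neg_mul, star_neg, neg_neg, mul_one, one_mul]
      rw [key_iso]
end
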